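/- The equation x³ − x·y² + y³ = 1 has exactly the five integer solutions (1, 1), (1, 0), (0, 1), (−1, 1), and (4, −3). -/

import Mathlib

/-!
In `ℤ[θ]`, `θ³ = θ - 1`, the solutions `(x, y)` are the elements `x - yθ` of norm `1` whose
`θ²`-coordinate vanishes. The units of `ℤ[θ]` are `±θⁿ`: if the real conjugate of a unit `v`
(under `θ ↦ ρ ≈ -1.3247`) has absolute value in `[1, |ρ|)`, then the complex conjugates are small,
so the traces of `v`, `vθ`, `vθ²` are bounded, hence so are the coordinates of `v`, and inspection
leaves only `±1`. The `θ²`-coordinate of `θⁿ` vanishes only for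
`n ∈ {0, 1, 3, -4, -13}` by Skolem's `p`-adic method with `p = 5` (and `p = 7` for one residue
class): in a residue class `n ≡ m` modulo the order of `θ` mod `p`, the coordinate is
`p`-adically dominated by a nonzero multiple of `n - m`.
-/

section Skolem

variable {R : Type*} [CommRing R]

theorem exists_one_add_pow_eq (x : R) (n : ℕ) :
    ∃ Q : R, (1 + x) ^ n = 1 + n * x + n.choose 2 * x ^ 2 + x ^ 3 * Q := by
  induction n with
  | zero => exact ⟨0, by simp⟩
  | succ n ih =>
    obtain ⟨Q, hQ⟩ := ih
    refine ⟨n.choose 2 + (1 + x) * Q, ?_⟩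
    rw [pow_succ, hQ, Nat.choose_succ_succ', Nat.choose_one_right]
    push_cast
    ring

theorem exists_one_add_mul_pow_eq (q x : R) (n : ℕ) :
    ∃ D : R, (1 + q * x) ^ n = 1 + q * (n * x + q * D) := by
  obtain ⟨Q, hQ⟩ := exists_one_add_pow_eq (q * x) n
  exact ⟨n.choose 2 * x ^ 2 + q * x ^ 3 * Q, by rw [hQ]; ring⟩

theorem Units.exists_val_zpow_eq_one_add {ε : Rˣ} {q β : R} (hε : (ε : R) = 1 + q * β) (t : ℤ) :
    ∃ D : R, ((ε ^ t : Rˣ) : R) = 1 + q * (t * β + q * D) := by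
  obtain ⟨m, rfl | rfl⟩ := Int.eq_nat_or_neg t
  · obtain ⟨D, hD⟩ := exists_one_add_mul_pow_eq q β m
    exact ⟨D, by rw [zpow_natCast, Units.val_pow_eq_pow_val, hε, hD, Int.cast_natCast]⟩
  · rw [zpow_neg, zpow_natCast, ← inv_pow, Units.val_pow_eq_pow_val]
    have h : ((ε⁻¹ : Rˣ) : R) * (1 + q * β) = 1 := by rw [← hε, Units.inv_mul]
    generalize ((ε⁻¹ : Rˣ) : R) = w at h ⊢
    have hw : w = 1 + q * (-β + q * (β ^ 2 * w)) := by linear_combination (1 - q * β) * h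
    obtain ⟨D, hD⟩ := exists_one_add_mul_pow_eq q (-β + q * (β ^ 2 * w)) m
    refine ⟨m * β ^ 2 * w + D, ?_⟩
    rw [congrArg (· ^ m) hw, hD]
    push_cast
    ring

theorem exists_one_add_prime_pow_mul_pow_prime {p : ℕ} (hp : p.Prime) (hp2 : p ≠ 2) (γ : R)
    (j : ℕ) : ∃ E : R, (1 + (p : R) ^ (j + 1) * γ) ^ p = 1 + (p : R) ^ (j + 2) * (γ + p * E) := by
  obtain ⟨Q, hQ⟩ := exists_one_add_pow_eq ((p : R) ^ (j + 1) * γ) p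
  obtain ⟨k, hk⟩ := hp.dvd_choose_self two_ne_zero (hp.two_le.lt_of_ne' hp2)
  refine ⟨k * p ^ j * γ ^ 2 + p ^ (2 * j) * γ ^ 3 * Q, ?_⟩
  rw [hQ, hk]
  push_cast
  ring

theorem exists_one_add_prime_mul_pow_prime_pow {p : ℕ} (hp : p.Prime) (hp2 : p ≠ 2) (β : R)
    (j : ℕ) : ∃ E : R, (1 + p * β) ^ p ^ j = 1 + (p : R) ^ (j + 1) * (β + p * E) := by
  induction j with
  | zero => exact ⟨0, by simp⟩
  | succ j ih =>
    obtain ⟨E, hE⟩ := ih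
    obtain ⟨E', hE'⟩ := exists_one_add_prime_pow_mul_pow_prime hp hp2 (β + p * E) j
    exact ⟨E + E', by rw [pow_succ, pow_mul, hE, hE']; ring⟩

theorem AddMonoidHom.map_intCast_mul (ℓ : R →+ ℤ) (n : ℤ) (v : R) : ℓ (n * v) = n * ℓ v := by
  rw [← zsmul_eq_mul, map_zsmul, smul_eq_mul]

theorem dvd_of_map_mul_zpow_eq_zero (ℓ : R →+ ℤ) {q : ℕ} {ε : Rˣ} {β X : R}
    (hε : (ε : R) = 1 + q * β) {t : ℤ} (ht : ℓ (X * ↑(ε ^ t)) = 0) : (q : ℤ) ∣ ℓ X := by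
  obtain ⟨D, hD⟩ := Units.exists_val_zpow_eq_one_add hε t
  have hX : X * ↑(ε ^ t) = X + ((q : ℤ) : R) * (t * (X * β) + ((q : ℤ) : R) * (X * D)) := by
    rw [hD]; push_cast; ring
  rw [hX, map_add, ℓ.map_intCast_mul, map_add, ℓ.map_intCast_mul, ℓ.map_intCast_mul] at ht
  exact ⟨-(t * ℓ (X * β) + q * ℓ (X * D)), by linarith⟩

/-- Skolem's argument: writing `t = pʲs` with `p ∤ s`, the coefficient `ℓ (X * εᵗ)` is
`p^(j+1) s ℓ (X * β)` modulo `p^(j+2)`. -/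
theorem eq_zero_of_map_mul_zpow_eq_zero (ℓ : R →+ ℤ) {p : ℕ} (hp : p.Prime) (hp2 : p ≠ 2)
    {ε : Rˣ} {β X : R} (hε : (ε : R) = 1 + p * β) (hX : ℓ X = 0)
    (hXβ : ¬ (p : ℤ) ∣ ℓ (X * β)) {t : ℤ} (ht : ℓ (X * ↑(ε ^ t)) = 0) : t = 0 := by
  by_contra ht0
  obtain ⟨s, hts, hs⟩ := ((Int.finiteMultiplicity_iff (a := (p : ℤ))).2
    ⟨by simpa using hp.ne_one, ht0⟩).exists_eq_pow_mul_and_not_dvd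
  set j := multiplicity (p : ℤ) t
  obtain ⟨E, hE⟩ := exists_one_add_prime_mul_pow_prime_pow hp hp2 β j
  have hη : ((ε ^ p ^ j : Rˣ) : R) = 1 + (p : R) ^ (j + 1) * (β + p * E) := by
    rw [Units.val_pow_eq_pow_val, hε, hE]
  obtain ⟨D, hD⟩ := Units.exists_val_zpow_eq_one_add hη s
  have hεt : ε ^ t = (ε ^ p ^ j) ^ s := by rw [hts, zpow_mul, ← zpow_natCast]; push_cast; rfl
  have hX' : X * ↑(ε ^ t) = X + ((p ^ (j + 1) : ℕ) : ℤ) * (s * (X * β)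
      + ((p : ℤ) : R) * (s * (X * E) + ((p ^ j : ℕ) : ℤ) * (X * D))) := by
    rw [hεt, hD]; push_cast; ring
  rw [hX'] at ht
  simp only [map_add, ℓ.map_intCast_mul, hX, zero_add, mul_eq_zero] at ht
  have hp0 : ((p ^ (j + 1) : ℕ) : ℤ) ≠ 0 := by exact_mod_cast (pow_pos hp.pos _).ne'
  have hdvd : (p : ℤ) ∣ s * ℓ (X * β) :=
    ⟨-(s * ℓ (X * E) + (p ^ j : ℕ) * ℓ (X * D)), by linarith [ht.resolve_left hp0]⟩
  exact ((Nat.prime_iff_prime_int.mp hp).dvd_or_dvd hdvd).elim hs hXβ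

end Skolem

theorem zpow_eq_zpow_mul_pow_zpow {G : Type*} [Group G] (g : G) {P : ℕ} {m n t : ℤ}
    (h : n - m = P * t) : g ^ n = g ^ m * (g ^ P) ^ t := by
  rw [← zpow_natCast, ← zpow_mul, ← zpow_add, ← h, add_sub_cancel]

/-- `⟨a, b, c⟩` stands for `a + bθ + cθ²` in `ℤ[θ]`, where `θ³ = θ - 1`. -/
@[ext]
structure ZTheta where
  a : ℤ
  b : ℤ
  c : ℤ
deriving DecidableEq

namespace ZTheta

instance : Zero ZTheta := ⟨⟨0, 0, 0⟩⟩
instance : One ZTheta := ⟨⟨1, 0, 0⟩⟩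
instance : Add ZTheta := ⟨fun u v => ⟨u.a + v.a, u.b + v.b, u.c + v.c⟩⟩
instance : Neg ZTheta := ⟨fun u => ⟨-u.a, -u.b, -u.c⟩⟩
instance : Mul ZTheta :=
  ⟨fun u v => ⟨u.a * v.a - u.b * v.c - u.c * v.b,
    u.a * v.b + u.b * v.a + u.b * v.c + u.c * v.b - u.c * v.c,
    u.a * v.c + u.b * v.b + u.c * v.a + u.c * v.c⟩⟩
instance : NatCast ZTheta := ⟨fun n => ⟨n, 0, 0⟩⟩
instance : IntCast ZTheta := ⟨fun n => ⟨n, 0, 0⟩⟩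

@[simp] theorem zero_def : (0 : ZTheta) = ⟨0, 0, 0⟩ := rfl
@[simp] theorem one_def : (1 : ZTheta) = ⟨1, 0, 0⟩ := rfl
@[simp] theorem add_def (u v : ZTheta) : u + v = ⟨u.a + v.a, u.b + v.b, u.c + v.c⟩ := rfl
@[simp] theorem neg_def (u : ZTheta) : -u = ⟨-u.a, -u.b, -u.c⟩ := rfl
@[simp] theorem mul_def (u v : ZTheta) :
    u * v = ⟨u.a * v.a - u.b * v.c - u.c * v.b,
      u.a * v.b + u.b * v.a + u.b * v.c + u.c * v.b - u.c * v.c,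
      u.a * v.c + u.b * v.b + u.c * v.a + u.c * v.c⟩ := rfl
@[simp] theorem natCast_def (n : ℕ) : (n : ZTheta) = ⟨n, 0, 0⟩ := rfl
@[simp] theorem intCast_def (n : ℤ) : (n : ZTheta) = ⟨n, 0, 0⟩ := rfl

instance : CommRing ZTheta where
  add_assoc _ _ _ := by ext <;> simp <;> ring
  zero_add _ := by ext <;> simp
  add_zero _ := by ext <;> simp
  add_comm _ _ := by ext <;> simp <;> ring
  neg_add_cancel _ := by ext <;> simp
  mul_assoc _ _ _ := by ext <;> simp <;> ring
  one_mul _ := by ext <;> simp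
  mul_one _ := by ext <;> simp
  left_distrib _ _ _ := by ext <;> simp <;> ring
  right_distrib _ _ _ := by ext <;> simp <;> ring
  zero_mul _ := by ext <;> simp
  mul_zero _ := by ext <;> simp
  mul_comm _ _ := by ext <;> simp <;> ring
  natCast_zero := by ext <;> simp
  natCast_succ _ := by ext <;> simp
  intCast_ofNat _ := by ext <;> simp
  intCast_negSucc _ := by ext <;> simp [Int.negSucc_eq]
  nsmul := nsmulRec
  zsmul := zsmulRec

def θ : ZTheta := ⟨0, 1, 0⟩

def θUnit : ZThetaˣ := ⟨θ, ⟨1, 0, -1⟩, by decide, by decide⟩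

def cAddHom : ZTheta →+ ℤ where
  toFun v := v.c
  map_zero' := rfl
  map_add' _ _ := rfl

/-- The field norm, i.e. the product of the three conjugates of `v`. -/
def norm (v : ZTheta) : ℤ :=
  v.a ^ 3 - v.a * v.b ^ 2 + 2 * v.a ^ 2 * v.c + v.a * v.c ^ 2 + 3 * v.a * v.b * v.c - v.b ^ 3
    + v.b * v.c ^ 2 + v.c ^ 3

def adj (v : ZTheta) : ZTheta :=
  ⟨v.a ^ 2 + 2 * v.a * v.c - v.b ^ 2 + v.b * v.c + v.c ^ 2, -v.c ^ 2 - v.a * v.b,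
    v.b ^ 2 - v.a * v.c - v.c ^ 2⟩

theorem mul_adj (v : ZTheta) : v * adj v = norm v := by
  ext <;> simp only [mul_def, intCast_def, adj, norm] <;> ring

theorem norm_mul (u v : ZTheta) : norm (u * v) = norm u * norm v := by
  simp only [norm, mul_def]
  ring

theorem norm_one : norm 1 = 1 := rfl

theorem isUnit_iff_abs_norm_eq_one {v : ZTheta} : IsUnit v ↔ |norm v| = 1 := by
  constructor
  · rintro ⟨u, rfl⟩
    have h : norm u * norm ↑u⁻¹ = 1 := by rw [← norm_mul, Units.mul_inv, norm_one]
    exact Int.isUnit_iff_abs_eq.mp (IsUnit.of_mul_eq_one _ h)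
  · intro h
    refine IsUnit.of_mul_eq_one (norm v * adj v) ?_
    rw [mul_left_comm, mul_adj, ← Int.cast_mul, ← sq, ← sq_abs, h]
    rfl

theorem exists_root_mem_Icc : ∃ x : ℝ, x ∈ Set.Icc (-1.3248) (-1.3247) ∧ x ^ 3 - x + 1 = 0 :=
  intermediate_value_Icc (by norm_num) (by fun_prop) (by norm_num)

/-- The real root of `X³ - X + 1`. -/
noncomputable def ρ : ℝ := exists_root_mem_Icc.choose

theorem ρ_mem : ρ ∈ Set.Icc (-1.3248) (-1.3247) := exists_root_mem_Icc.choose_spec.1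

theorem ρ_cube : ρ ^ 3 = ρ - 1 := by
  unfold ρ
  linear_combination exists_root_mem_Icc.choose_spec.2

noncomputable def φ : ZTheta →+* ℝ where
  toFun v := v.a + v.b * ρ + v.c * ρ ^ 2
  map_one' := by simp
  map_zero' := by simp
  map_add' _ _ := by simp only [add_def]; push_cast; ring
  map_mul' u v := by
    simp only [mul_def]
    push_cast
    linear_combination (-((u.b : ℝ) * v.c + u.c * v.b) - u.c * v.c * ρ) * ρ_cube

theorem φ_apply (v : ZTheta) : φ v = v.a + v.b * ρ + v.c * ρ ^ 2 := rfl

theorem φ_θ : φ θ = ρ := by simp [φ_apply, θ]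

theorem φ_θUnit_zpow (n : ℤ) : φ ↑(θUnit ^ n) = ρ ^ n := by
  have h := Units.coe_map (φ : ZTheta →* ℝ) (θUnit ^ n)
  rw [map_zpow, Units.val_zpow_eq_zpow_val, Units.coe_map] at h
  exact h.symm.trans (congrArg (· ^ n) φ_θ)

/- The complex embedding `ψ` sends `θ` to a root `ρ'` of `X² + ρX + ρ² - 1`, so that
`ψ v = A + Bρ'` with `A = a - c(ρ² - 1)`, `B = b - cρ`; hence the following formulas for
`|ψ v|²` and `Re ψ v`. -/
noncomputable def cplxNormSq (v : ZTheta) : ℝ :=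
  (v.a - v.c * (ρ ^ 2 - 1)) ^ 2 - ρ * (v.a - v.c * (ρ ^ 2 - 1)) * (v.b - v.c * ρ)
    + (ρ ^ 2 - 1) * (v.b - v.c * ρ) ^ 2

noncomputable def cplxRe (v : ZTheta) : ℝ := v.a - v.c * (ρ ^ 2 - 1) - ρ * (v.b - v.c * ρ) / 2

theorem norm_eq_φ_mul_cplxNormSq (v : ZTheta) : (norm v : ℝ) = φ v * cplxNormSq v := by
  simp only [norm, φ_apply, cplxNormSq]
  push_cast
  linear_combination ((v.c : ℝ) ^ 3 + v.c ^ 3 * ρ - v.c ^ 3 * ρ ^ 3 + v.b * v.c ^ 2 - v.b ^ 3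
    + 3 * v.a * v.b * v.c) * ρ_cube

def trace (v : ZTheta) : ℤ := 3 * v.a + 2 * v.c

theorem trace_eq (v : ZTheta) : (trace v : ℝ) = φ v + 2 * cplxRe v := by
  simp only [trace, φ_apply, cplxRe]
  push_cast
  ring

theorem cplxRe_sq_le (v : ZTheta) : cplxRe v ^ 2 ≤ cplxNormSq v := by
  have hρ := ρ_mem.2
  have : 0 ≤ (3 * ρ ^ 2 / 4 - 1) * (v.b - v.c * ρ) ^ 2 := by
    apply mul_nonneg <;> nlinarith [sq_nonneg ((v.b : ℝ) - v.c * ρ)]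
  simp only [cplxRe, cplxNormSq]
  nlinarith [this]

/-- With `t = |φ v|`, a unit has `|trace v| ≤ t + 2 / √t`, which is `< 4` for `1 ≤ t ≤ 5/2`. -/
theorem abs_trace_le_three {v : ZTheta} (hv : |norm v| = 1) (h1 : 1 ≤ |φ v|)
    (h2 : |φ v| ≤ 5 / 2) : |trace v| ≤ 3 := by
  have hN : 0 ≤ cplxNormSq v := (sq_nonneg _).trans (cplxRe_sq_le v)
  have hprod : |φ v| * cplxNormSq v = 1 := by
    rw [← abs_of_nonneg hN, ← abs_mul, ← norm_eq_φ_mul_cplxNormSq]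
    exact_mod_cast hv
  have hf : 4 < |φ v| * (4 - |φ v|) ^ 2 := by
    nlinarith [mul_nonneg (sub_nonneg.2 h1) (sub_nonneg.2 h2),
      mul_nonneg (mul_nonneg (sub_nonneg.2 h1) (sub_nonneg.2 h2)) (sub_nonneg.2 h2)]
  have hm : 4 * cplxNormSq v < (4 - |φ v|) ^ 2 :=
    lt_of_mul_lt_mul_left (by linarith) (abs_nonneg (φ v))
  have hre : |2 * cplxRe v| < 4 - |φ v| :=
    abs_lt_of_sq_lt_sq (by nlinarith [cplxRe_sq_le v]) (by linarith)
  have hlt : |(trace v : ℝ)| < 4 := by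
    rw [trace_eq]
    linarith [abs_add_le (φ v) (2 * cplxRe v)]
  have : |trace v| < 4 := by exact_mod_cast hlt
  omega

/-- Since `|ρ|³ < 5/2`, the trace bound applies to `v`, `vθ` and `vθ²`, which confines the
coordinates of `v` to `{-1, 0, 1}`. -/
theorem eq_one_or_eq_neg_one_of_abs_φ_mem_Ico {v : ZTheta} (hv : |norm v| = 1)
    (h : |φ v| ∈ Set.Ico 1 (-ρ)) : v = 1 ∨ v = -1 := by
  obtain ⟨h1, h2⟩ := h
  obtain ⟨hρ1, hρ2⟩ := ρ_mem
  have hρ : 1 ≤ -ρ := by linarith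
  have hθ : |norm θ| = 1 := rfl
  have hφ1 : |φ (v * θ)| = |φ v| * -ρ := by
    rw [map_mul, φ_θ, abs_mul, abs_of_neg (show ρ < 0 by linarith)]
  have hφ2 : |φ (v * θ * θ)| = |φ v| * -ρ * -ρ := by
    rw [map_mul, φ_θ, abs_mul, hφ1, abs_of_neg (show ρ < 0 by linarith)]
  have t0 := abs_trace_le_three hv h1 (by linarith)
  have t1 := abs_trace_le_three (v := v * θ) (by rw [norm_mul, abs_mul, hv, hθ, one_mul])
    (by rw [hφ1]; exact one_le_mul_of_one_le_of_one_le h1 hρ) (by rw [hφ1]; nlinarith)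
  have t2 := abs_trace_le_three (v := v * θ * θ)
    (by rw [norm_mul, norm_mul, abs_mul, abs_mul, hv, hθ, one_mul, one_mul])
    (by rw [hφ2]; exact one_le_mul_of_one_le_of_one_le (one_le_mul_of_one_le_of_one_le h1 hρ) hρ)
    (by rw [hφ2]; nlinarith [mul_le_mul_of_nonneg_left h2.le (abs_nonneg (φ v))])
  obtain ⟨a, b, c⟩ := v
  simp only [trace, mul_def, θ] at t0 t1 t2
  rw [abs_le] at t0 t1 t2
  obtain ⟨ha1, ha2⟩ : -1 ≤ a ∧ a ≤ 1 := by omega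
  obtain ⟨hb1, hb2⟩ : -1 ≤ b ∧ b ≤ 1 := by omega
  obtain ⟨hc1, hc2⟩ : -1 ≤ c ∧ c ≤ 1 := by omega
  clear t0 t1 t2 hφ1 hφ2 hθ
  rw [φ_apply] at h1 h2
  obtain ⟨h2a, h2b⟩ := abs_lt.mp h2
  interval_cases a <;> interval_cases b <;> interval_cases c <;>
  first
    | (left; rfl)
    | (right; rfl)
    | (exfalso; revert hv; decide)
    | (exfalso
       rcases le_abs'.mp h1 with h1 | h1 <;> push_cast at h1 h2a h2b <;> nlinarith)

theorem exists_eq_θUnit_zpow (u : ZThetaˣ) :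
    ∃ n : ℤ, (u : ZTheta) = ↑(θUnit ^ n) ∨ (u : ZTheta) = -↑(θUnit ^ n) := by
  obtain ⟨hρ1, hρ2⟩ := ρ_mem
  have hu : |norm u| = 1 := isUnit_iff_abs_norm_eq_one.mp u.isUnit
  have hφu : 0 < |φ u| := abs_pos.mpr fun h0 => by
    have h := norm_eq_φ_mul_cplxNormSq u
    rw [h0, zero_mul, Int.cast_eq_zero] at h
    simp [h] at hu
  obtain ⟨n, hn1, hn2⟩ := exists_mem_Ico_zpow hφu (show 1 < -ρ by linarith)
  have hpos : 0 < (-ρ) ^ n := zpow_pos (by linarith) n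
  set V := u * θUnit ^ (-n)
  have hφV : |φ V| = |φ u| / (-ρ) ^ n := by
    rw [Units.val_mul, map_mul, φ_θUnit_zpow, abs_mul, abs_zpow,
      abs_of_neg (show ρ < 0 by linarith), zpow_neg, div_eq_mul_inv]
  have hV := eq_one_or_eq_neg_one_of_abs_φ_mem_Ico (isUnit_iff_abs_norm_eq_one.mp V.isUnit)
    ⟨by rwa [hφV, one_le_div hpos],
      by rwa [hφV, div_lt_iff₀ hpos, ← zpow_one_add₀ (by linarith), add_comm]⟩
  have huV : (u : ZTheta) = V * ↑(θUnit ^ n) := by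
    rw [← Units.val_mul, mul_assoc, ← zpow_add, neg_add_cancel, zpow_zero, mul_one]
  refine ⟨n, hV.imp (fun h => ?_) (fun h => ?_)⟩ <;> rw [huV, h] <;> ring

theorem natCast_dvd_c_θUnit_zpow {q P : ℕ} {β : ZTheta} (hP : ↑(θUnit ^ P) = 1 + q * β)
    {m n : ℤ} (hn : (↑(θUnit ^ n) : ZTheta).c = 0) (hmn : n ≡ m [ZMOD P]) :
    (q : ℤ) ∣ (↑(θUnit ^ m) : ZTheta).c := by
  obtain ⟨t, ht⟩ := hmn.symm.dvd
  rw [zpow_eq_zpow_mul_pow_zpow θUnit ht, Units.val_mul] at hn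
  exact dvd_of_map_mul_zpow_eq_zero cAddHom hP hn

theorem eq_of_c_θUnit_zpow_eq_zero_of_modEq {p P : ℕ} (hp : p.Prime) (hp2 : p ≠ 2)
    {β : ZTheta} (hP : ↑(θUnit ^ P) = 1 + p * β) {m n : ℤ}
    (hm : (↑(θUnit ^ m) : ZTheta).c = 0) (hmβ : ¬ (p : ℤ) ∣ (↑(θUnit ^ m) * β).c)
    (hn : (↑(θUnit ^ n) : ZTheta).c = 0) (hmn : n ≡ m [ZMOD P]) : n = m := by
  obtain ⟨t, ht⟩ := hmn.symm.dvd
  rw [zpow_eq_zpow_mul_pow_zpow θUnit ht, Units.val_mul] at hn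
  rw [← sub_eq_zero, ht, eq_zero_of_map_mul_zpow_eq_zero cAddHom hp hp2 hP hm hmβ hn, mul_zero]

/- `θ²⁴ ≡ 1 mod 5` and `θ⁴⁸ ≡ 1 mod 7`. The class `n ≡ 0 mod 24` needs the prime `7`, because `5`
divides the `θ²`-coordinate of `(θ²⁴ - 1) / 5`. -/
set_option maxRecDepth 4000 in
theorem mem_of_c_θUnit_zpow_eq_zero {n : ℤ} (hn : (↑(θUnit ^ n) : ZTheta).c = 0) :
    n ∈ ({0, 1, 3, -4, -13} : Set ℤ) := by
  have h24 : ↑(θUnit ^ 24) = 1 + (5 : ℕ) * (⟨30, -53, 40⟩ : ZTheta) := by decide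
  have h48 : ↑(θUnit ^ 48) = 1 + (7 : ℕ) * (⟨18400, -32290, 24375⟩ : ZTheta) := by decide
  have skolem5 {m : ℤ} (hm : (↑(θUnit ^ m) : ZTheta).c = 0)
      (hmβ : ¬ (5 : ℤ) ∣ (↑(θUnit ^ m) * (⟨30, -53, 40⟩ : ZTheta)).c) (hmn : n % 24 = m % 24) :
      n = m :=
    eq_of_c_θUnit_zpow_eq_zero_of_modEq (by norm_num) (by norm_num) h24 hm hmβ hn hmn
  have h5 : (5 : ℤ) ∣ (↑(θUnit ^ (n % 24).toNat) : ZTheta).c := by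
    rw [← zpow_natCast, Int.toNat_of_nonneg (by omega)]
    exact natCast_dvd_c_θUnit_zpow h24 hn (Int.mod_modEq n 24).symm
  have hscan : ∀ k : ℕ, k < 24 → (5 : ℤ) ∣ (↑(θUnit ^ k) : ZTheta).c →
      k = 0 ∨ k = 1 ∨ k = 3 ∨ k = 11 ∨ k = 20 := by decide
  rcases hscan _ (by omega) h5 with hk | hk | hk | hk | hk
  · rcases (by omega : n % 48 = 0 % 48 ∨ n % 48 = 24 % 48) with h | h
    · exact Or.inl <| eq_of_c_θUnit_zpow_eq_zero_of_modEq (by norm_num) (by norm_num) h48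
        (by decide) (by decide) hn h
    · exact absurd (natCast_dvd_c_θUnit_zpow h48 hn h) (by decide)
  · exact Or.inr <| Or.inl <| skolem5 (by decide) (by decide) (by omega)
  · exact Or.inr <| Or.inr <| Or.inl <| skolem5 (by decide) (by decide) (by omega)
  · exact Or.inr <| Or.inr <| Or.inr <| Or.inr <| skolem5 (by decide) (by decide) (by omega)
  · exact Or.inr <| Or.inr <| Or.inr <| Or.inl <| skolem5 (by decide) (by decide) (by omega)

theorem mem_of_norm_eq_one_of_c_eq_zero {v : ZTheta} (hN : norm v = 1) (hc : v.c = 0) :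
    v ∈ ({⟨1, -1, 0⟩, ⟨1, 0, 0⟩, ⟨0, -1, 0⟩, ⟨-1, -1, 0⟩, ⟨4, 3, 0⟩} : Set ZTheta) := by
  obtain ⟨u, rfl⟩ := isUnit_iff_abs_norm_eq_one.mpr (by rw [hN]; rfl)
  obtain ⟨n, hn | hn⟩ := exists_eq_θUnit_zpow u <;> rw [hn] at hN hc ⊢
  · rcases mem_of_c_θUnit_zpow_eq_zero hc with rfl | rfl | rfl | rfl | rfl <;>
      revert hN <;> decide
  · rcases mem_of_c_θUnit_zpow_eq_zero (by simpa using hc) with rfl | rfl | rfl | rfl | rfl <;>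
      revert hN <;> decide

end ZTheta

/-- The equation `x³ − x·y² + y³ = 1` has exactly the five integer solutions
`(1, 1)`, `(1, 0)`, `(0, 1)`, `(−1, 1)`, `(4, −3)`. -/
theorem delone_quintuple_solutions :
    {p : ℤ × ℤ | p.1 ^ 3 - p.1 * p.2 ^ 2 + p.2 ^ 3 = 1} =
      {(1, 1), (1, 0), (0, 1), (-1, 1), (4, -3)} := by
  ext ⟨x, y⟩
  simp only [Set.mem_ofPred_eq, Set.mem_insert_iff, Set.mem_singleton_iff, Prod.mk.injEq]
  refine ⟨fun h => ?_, by
    rintro (⟨rfl, rfl⟩ | ⟨rfl, rfl⟩ | ⟨rfl, rfl⟩ | ⟨rfl, rfl⟩ | ⟨rfl, rfl⟩) <;> norm_num⟩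
  have hN : ZTheta.norm ⟨x, -y, 0⟩ = 1 := by rw [← h, ZTheta.norm]; ring
  have h := ZTheta.mem_of_norm_eq_one_of_c_eq_zero hN rfl
  simp only [Set.mem_insert_iff, Set.mem_singleton_iff, ZTheta.mk.injEq] at h
  omega
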